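/- arXiv:1102.3029 — 4 statements merged into one kernel-verified Lean document; each statement's English description precedes it below -/
import Mathlib

section
/- In an edge-colored multigraph, if there exists a simple cycle whose edges have at least two different colors, and every color class of edges forms a clique on the set of vertices it touches, then there exists a simple cycle whose edges have pairwise distinct colors. -/
/-- A simple cycle in a multigraph given by an endpoints map `ends : E → Sym2 V`:
`k ≥ 2` vertices `v 0, …, v (k-1)` (pairwise distinct), pairwise distinct edges
`e 0, …, e (k-1)`, with edge `e i` joining `v i` and `v (i+1)` (cyclically). -/
def IsCycle {V E : Type} (ends : E → Sym2 V) (k : ℕ) (v : ZMod k → V)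
    (e : ZMod k → E) : Prop :=
  2 ≤ k ∧ Function.Injective v ∧ Function.Injective e ∧
    ∀ i : ZMod k, ends (e i) = s(v i, v (i + 1))

private lemma castinj {n a b : ℕ} (h : a < n) (h2 : b < n) (hc : (a : ZMod n) = b) : a = b := by
  have h1 := ZMod.val_cast_of_lt h
  have h3 := ZMod.val_cast_of_lt h2
  rw [hc] at h1; omega

private lemma rot_cycle {V E : Type} {ends : E → Sym2 V} {k : ℕ} {v : ZMod k → V}
    {e : ZMod k → E} (h : IsCycle ends k v e) (a : ZMod k) :
    IsCycle ends k (fun i => v (i + a)) (fun i => e (i + a)) := by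
  obtain ⟨hk, hv, he, hends⟩ := h
  refine ⟨hk, ?_, ?_, ?_⟩
  · intro i j hij; exact add_right_cancel (hv hij)
  · intro i j hij; exact add_right_cancel (he hij)
  · intro i
    have : i + 1 + a = i + a + 1 := by ring
    simpa [this] using hends (i + a)

private lemma shortcut {V E C : Type} {ends : E → Sym2 V} {color : E → C}
    (hclique : ∀ (c : C) (a b : V), a ≠ b →
      (∃ e, color e = c ∧ a ∈ ends e) → (∃ e, color e = c ∧ b ∈ ends e) →
      ∃ e, color e = c ∧ ends e = s(a, b))
    {k : ℕ} {v : ZMod k → V} {e : ZMod k → E}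
    (hc : IsCycle ends k v e) (b m : ZMod k)
    (hcb : color (e b) = color (e 0))
    (hcm : color (e m) ≠ color (e 0))
    (hm0 : 0 < m.val) (hmb : m.val < b.val) :
    ∃ (k' : ℕ) (v' : ZMod k' → V) (e' : ZMod k' → E), k' < k ∧
      IsCycle ends k' v' e' ∧ ∃ i j, color (e' i) ≠ color (e' j) := by
  obtain ⟨hk, hv, he, hends⟩ := hc
  haveI : NeZero k := ⟨by omega⟩
  set B := b.val with hB
  have hBk : B < k := b.val_lt
  have hB2 : 2 ≤ B := by omega
  have hk3 : 3 ≤ k := by omega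
  haveI : NeZero B := ⟨by omega⟩
  have hval1 : (1 : ZMod k).val = 1 := by
    rw [ZMod.val_one_eq_one_mod]; exact Nat.mod_eq_of_lt (by omega)
  have hbb : ((B : ℕ) : ZMod k) = b := ZMod.natCast_rightInverse b
  have hmm : ((m.val : ℕ) : ZMod k) = m := ZMod.natCast_rightInverse m
  -- the chord
  have h1b : v 1 ≠ v b := by
    intro hvb
    have := hv hvb
    have : (1 : ZMod k).val = b.val := by rw [this]
    omega
  obtain ⟨f, hfc, hfe⟩ := hclique (color (e 0)) (v 1) (v b) h1b
    ⟨e 0, rfl, by rw [hends 0]; simp⟩ ⟨e b, hcb, by rw [hends b]; simp⟩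
  set v' : ZMod B → V := fun i => v ((i.val + 1 : ℕ) : ZMod k) with hv'
  set e' : ZMod B → E := fun i => if i.val + 1 < B then e ((i.val + 1 : ℕ) : ZMod k) else f
    with he'
  have hvlt : ∀ i : ZMod B, i.val < B := fun i => i.val_lt
  -- key: interior arc edges differ from the chord
  have key : ∀ i : ZMod B, i.val + 1 < B → e ((i.val + 1 : ℕ) : ZMod k) ≠ f := by
    intro i hi hef
    set t : ZMod k := ((i.val + 1 : ℕ) : ZMod k) with ht
    have hends_t : s(v t, v (t + 1)) = s(v 1, v b) := by
      rw [← hends t, hef, hfe]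
    have htv : t.val = i.val + 1 := ZMod.val_cast_of_lt (by omega)
    rw [Sym2.eq_iff] at hends_t
    rcases hends_t with ⟨h1, h2⟩ | ⟨h1, h2⟩
    · -- t = 1, t+1 = b, so B = 2 and m = 1 = t
      have ht1 : t = 1 := hv h1
      have : i.val + 1 = 1 := by
        rw [← htv, ht1, hval1]
      have hb2 : b = (2 : ℕ) := by
        rw [← hv h2, ht1]; norm_num
      have hB2' : B = 2 := by
        rw [hB, hb2, ZMod.val_cast_of_lt (by omega)]
      have hm1 : m.val = 1 := by omega
      have : m = t := by rw [← hmm, hm1, ht, this]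
      rw [← this] at hef
      rw [hef, hfc] at hcm
      exact hcm rfl
    · -- t = b: impossible since t.val = i.val + 1 < B = b.val
      have := hv h1
      rw [this] at htv
      omega
  refine ⟨B, v', e', hBk, ⟨hB2, ?_, ?_, ?_⟩, ?_⟩
  · -- v' injective
    intro i j hij
    simp only [hv'] at hij
    have := castinj (n := k) (a := i.val + 1) (b := j.val + 1) (by have := hvlt i; omega)
      (by have := hvlt j; omega) (hv hij)
    exact ZMod.val_injective B (by omega)
  · -- e' injective
    intro i j hij
    simp only [he'] at hij
    by_cases hi : i.val + 1 < B <;> by_cases hj : j.val + 1 < B <;>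
      simp only [hi, hj, if_true, if_false, reduceIte] at hij
    · have := castinj (n := k) (a := i.val + 1) (b := j.val + 1) (by omega) (by omega) (he hij)
      exact ZMod.val_injective B (by omega)
    · exact absurd hij (key i hi)
    · exact absurd hij.symm (key j hj)
    · have := hvlt i; have := hvlt j
      exact ZMod.val_injective B (by omega)
  · -- ends condition
    intro i
    have hvi := hvlt i
    by_cases hi : i.val + 1 < B
    · have hadd : (i + 1).val = i.val + 1 := by
        have h1B : (1 : ZMod B).val = 1 := by
          rw [ZMod.val_one_eq_one_mod]; exact Nat.mod_eq_of_lt (by omega)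
        rw [ZMod.val_add_of_lt (by omega)]
        omega
      simp only [he', hv', hi, if_true, hadd]
      have : ((i.val + 1 : ℕ) : ZMod k) + 1 = ((i.val + 1 + 1 : ℕ) : ZMod k) := by push_cast; ring
      rw [hends, this]
    · have hiB : i.val + 1 = B := by omega
      have hadd : (i + 1).val = 0 := by
        have : i + 1 = 0 := by
          have : i = ((i.val : ℕ) : ZMod B) := (ZMod.natCast_rightInverse i).symm
          rw [this]
          have : ((i.val : ℕ) : ZMod B) + 1 = ((i.val + 1 : ℕ) : ZMod B) := by push_cast; ring
          rw [this, hiB]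
          exact ZMod.natCast_self B
        rw [this, ZMod.val_zero]
      simp only [he', hv', hi, if_false, hadd, reduceIte]
      rw [hfe, hiB, hbb]
      simp only [Nat.zero_add, Nat.cast_one]
      exact Sym2.eq_swap
  · -- bichromatic
    refine ⟨((m.val - 1 : ℕ) : ZMod B), ((B - 1 : ℕ) : ZMod B), ?_⟩
    have hvm : ((m.val - 1 : ℕ) : ZMod B).val = m.val - 1 := ZMod.val_cast_of_lt (by omega)
    have hvB : ((B - 1 : ℕ) : ZMod B).val = B - 1 := ZMod.val_cast_of_lt (by omega)
    simp only [he', hvm, hvB]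
    have h1 : m.val - 1 + 1 = m.val := by omega
    have h2 : ¬ (B - 1 + 1 < B) := by omega
    rw [if_pos (by omega), if_neg h2, h1, hmm, hfc]
    exact hcm

/-- If an edge-colored finite multigraph, in which every color class spans a clique on the
vertices it touches, contains a simple cycle whose edges have at least two different colors,
then it contains a simple cycle whose edges have pairwise distinct colors. -/
theorem rainbow_cycle_of_bichromatic_cycle {V E C : Type} [Fintype V] [Fintype E]
    (ends : E → Sym2 V) (color : E → C)
    (hclique : ∀ (c : C) (a b : V), a ≠ b →
      (∃ e, color e = c ∧ a ∈ ends e) → (∃ e, color e = c ∧ b ∈ ends e) →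
      ∃ e, color e = c ∧ ends e = s(a, b))
    (hbi : ∃ (k : ℕ) (v : ZMod k → V) (e : ZMod k → E),
      IsCycle ends k v e ∧ ∃ i j : ZMod k, color (e i) ≠ color (e j)) :
    ∃ (k : ℕ) (v : ZMod k → V) (e : ZMod k → E),
      IsCycle ends k v e ∧ Function.Injective fun i => color (e i) := by
  obtain ⟨k, v, e, hcyc, hbc⟩ := hbi
  induction k using Nat.strong_induction_on with
  | _ k ih =>
  by_cases hrb : Function.Injective fun i => color (e i)
  · exact ⟨k, v, e, hcyc, hrb⟩
  rw [Function.not_injective_iff] at hrb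
  obtain ⟨a, b, hab, hne⟩ := hrb

  haveI : NeZero k := ⟨by have := hcyc.1; omega⟩
  -- find an edge of a different color
  obtain ⟨i, j, hij⟩ := hbc
  have hm : ∃ m : ZMod k, color (e m) ≠ color (e a) := by
    by_cases h : color (e i) = color (e a)
    · exact ⟨j, by rw [← h]; exact fun hh => hij hh.symm⟩
    · exact ⟨i, h⟩
  obtain ⟨m, hmc⟩ := hm
  have hma : m ≠ a := fun h => hmc (by rw [h])
  have hmb : m ≠ b := fun h => hmc (by rw [h, ← hab])
  -- rotate so that a same-colored edge is at 0 and m is strictly inside the arc to the other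
  have main : ∃ (k' : ℕ) (v' : ZMod k' → V) (e' : ZMod k' → E), k' < k ∧
      IsCycle ends k' v' e' ∧ ∃ i j, color (e' i) ≠ color (e' j) := by
    by_cases hlt : (m - a).val < (b - a).val
    · have hcyc' := rot_cycle hcyc a
      refine shortcut hclique hcyc' (b - a) (m - a) ?_ ?_ ?_ hlt
      · simp [hab]
      · simpa using hmc
      · exact ZMod.val_pos.mpr (sub_ne_zero.mpr hma)
    · -- (m - a).val > (b - a).val; use b as pivot
      have hba : b ≠ a := fun h => hne h.symm
      have hA1 : 1 ≤ (b - a).val := ZMod.val_pos.mpr (sub_ne_zero.mpr hba)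
      have hMA : (m - a).val ≠ (b - a).val := by
        intro h
        exact hmb (by have := ZMod.val_injective k h; rwa [sub_left_inj] at this)
      set A := (b - a).val with hAdef
      set M := (m - a).val with hMdef
      have hMk : M < k := (m - a).val_lt
      have hAk : A < k := (b - a).val_lt
      have hgt : A < M := by omega
      have hmb' : m - b = ((M - A : ℕ) : ZMod k) := by
        have h1 : m - a = ((M : ℕ) : ZMod k) := (ZMod.natCast_rightInverse _).symm
        have h2 : b - a = ((A : ℕ) : ZMod k) := (ZMod.natCast_rightInverse _).symm
        have : m - b = (m - a) - (b - a) := by ring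
        rw [this, h1, h2, ← Nat.cast_sub (by omega)]
      have hab' : a - b = ((k - A : ℕ) : ZMod k) := by
        have h2 : b - a = ((A : ℕ) : ZMod k) := (ZMod.natCast_rightInverse _).symm
        have : a - b = -(b - a) := by ring
        rw [this, h2, Nat.cast_sub (by omega), ZMod.natCast_self]
        ring
      have hvmb : (m - b).val = M - A := by rw [hmb']; exact ZMod.val_cast_of_lt (by omega)
      have hvab : (a - b).val = k - A := by rw [hab']; exact ZMod.val_cast_of_lt (by omega)
      have hcyc' := rot_cycle hcyc b
      refine shortcut hclique hcyc' (a - b) (m - b) ?_ ?_ ?_ (by omega)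
      · simp [hab]
      · simpa [← hab] using hmc
      · omega
  obtain ⟨k', v', e', hk', hcyc', hbc'⟩ := main
  exact ih k' hk' v' e' hcyc' hbc'
end

section
/- Any two distinct same-colored edges on a shortest bichromatic cycle give a contradiction: In a finite edge-colored graph where each color class spans a clique, if C is a simple cycle of minimum length among cycles using at least two distinct edge colors, then all edges of C have pairwise distinct colors. -/
lemma shortcut_cycle {V E : Type} (ends : E → Sym2 V) (k : ℕ) (v : ZMod k → V)
    (e : ZMod k → E) (hk : 2 ≤ k) (hv : Function.Injective v)
    (he : Function.Injective e)
    (hends : ∀ i : ZMod k, ends (e i) = s(v i, v (i + 1)))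
    (a b : ZMod k) (f : E) (hab : a ≠ b)
    (hf : ends f = s(v b, v a)) (hfe : ∀ m, f ≠ e m) :
    IsCycle ends ((b - a).val + 1)
      (fun t => v (a + (t.val : ZMod k)))
      (fun t => if ((t.val : ℕ) : ZMod k) = b - a then f else e (a + (t.val : ZMod k))) := by
  haveI : NeZero k := ⟨by omega⟩
  set d : ℕ := (b - a).val with hd
  have hd1 : 1 ≤ d := by
    have : b - a ≠ 0 := fun h => hab (by rwa [sub_eq_zero, eq_comm] at h)
    exact ZMod.val_pos.mpr this
  have hdk : d < k := ZMod.val_lt _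
  set m : ℕ := d + 1 with hm
  haveI : NeZero m := ⟨by omega⟩
  have hmk : m ≤ k := by omega
  have hcastd : ((d : ℕ) : ZMod k) = b - a := ZMod.natCast_rightInverse _
  have hcast : ∀ t s : ZMod m, ((t.val : ℕ) : ZMod k) = ((s.val : ℕ) : ZMod k) → t = s := by
    intro t s h
    have ht := ZMod.val_lt t
    have hs := ZMod.val_lt s
    have : t.val = s.val := by
      have := congrArg ZMod.val h
      rwa [ZMod.val_cast_of_lt (by omega), ZMod.val_cast_of_lt (by omega)] at this
    exact ZMod.val_injective m this
  refine ⟨by omega, ?_, ?_, ?_⟩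
  · intro t s h
    exact hcast t s (by have := hv h; simpa using this)
  · intro t s h
    simp only at h
    split_ifs at h with h1 h2 h2
    · exact hcast t s (h1.trans h2.symm)
    · exact absurd h (hfe _)
    · exact absurd h.symm (hfe _)
    · apply hcast t s
      have := he h
      have : a + ((t.val : ℕ) : ZMod k) = a + ((s.val : ℕ) : ZMod k) := this
      exact add_left_cancel this
  · intro t
    by_cases ht : t.val = d
    · have htc : ((t.val : ℕ) : ZMod k) = b - a := by rw [ht]; exact hcastd
      have ht1 : t + 1 = 0 := by
        have : t = ((d : ℕ) : ZMod m) := by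
          apply ZMod.val_injective m
          rw [ht, ZMod.val_cast_of_lt (by omega)]
        rw [this]
        have : ((d : ℕ) : ZMod m) + 1 = ((m : ℕ) : ZMod m) := by
          rw [show ((m : ℕ) : ZMod m) = ((d + 1 : ℕ) : ZMod m) from rfl]; push_cast; ring
        rw [this, ZMod.natCast_self]
      simp only []
      rw [if_pos htc, ht1, ht, hcastd]
      simp only [ZMod.val_zero, Nat.cast_zero, add_zero]
      rw [hf]
      have : a + (b - a) = b := by ring
      rw [this, Sym2.eq_swap]
    · have htd : t.val < d := by have := ZMod.val_lt t; omega
      have htc : ((t.val : ℕ) : ZMod k) ≠ b - a := by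
        intro h
        have := congrArg ZMod.val h
        rw [ZMod.val_cast_of_lt (by omega)] at this
        omega
      have ht1 : (t + 1).val = t.val + 1 := by
        rw [ZMod.val_add_of_lt]
        · rw [ZMod.val_one_eq_one_mod]
          rw [Nat.mod_eq_of_lt (by omega)]
        · rw [ZMod.val_one_eq_one_mod, Nat.mod_eq_of_lt (by omega)]
          omega
      simp only []
      rw [if_neg htc, ht1]
      rw [hends]
      push_cast
      ring_nf

/-- In a finite edge-colored graph where each color class spans a clique, a simple cycle of
minimum length among those using at least two distinct edge colors has pairwise distinct
edge colors. -/
theorem min_bichromatic_cycle_is_rainbow {V E C : Type} [Fintype V] [Fintype E]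
    (ends : E → Sym2 V) (color : E → C)
    (hclique : ∀ (c : C) (a b : V), a ≠ b →
      (∃ e, color e = c ∧ a ∈ ends e) → (∃ e, color e = c ∧ b ∈ ends e) →
      ∃ e, color e = c ∧ ends e = s(a, b))
    (k : ℕ) (v : ZMod k → V) (e : ZMod k → E)
    (hC : IsCycle ends k v e)
    (hbi : ∃ i j : ZMod k, color (e i) ≠ color (e j))
    (hmin : ∀ (k' : ℕ) (v' : ZMod k' → V) (e' : ZMod k' → E),
      IsCycle ends k' v' e' → (∃ i j : ZMod k', color (e' i) ≠ color (e' j)) → k ≤ k') :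
    Function.Injective fun i => color (e i) := by
  obtain ⟨hk, hv, he, hends⟩ := hC
  haveI : NeZero k := ⟨by omega⟩
  have hcast_ne : ∀ n : ℕ, 0 < n → n < k → ((n : ℕ) : ZMod k) ≠ 0 := by
    intro n hn hnk h
    have h1 := (ZMod.natCast_eq_zero_iff n k).mp h
    have := Nat.le_of_dvd hn h1
    omega
  -- Step 1: no two adjacent edges share a color.
  have hadj : ∀ i : ZMod k, color (e i) ≠ color (e (i + 1)) := by
    intro i hcol
    obtain ⟨p, q, hpq⟩ := hbi
    -- a differently-colored edge exists
    have hmex : ∃ m, color (e m) ≠ color (e i) := by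
      by_cases h : color (e p) = color (e i)
      · exact ⟨q, fun hq => hpq (by rw [h, hq])⟩
      · exact ⟨p, h⟩
    obtain ⟨m, hmc⟩ := hmex
    have hmi : m ≠ i := fun h => hmc (by rw [h])
    have hmi1 : m ≠ i + 1 := fun h => hmc (by rw [h, ← hcol])
    -- k ≥ 3
    have hk3 : 3 ≤ k := by
      by_contra h
      have hk2 : k = 2 := by omega
      subst hk2
      have hx : ∀ x : ZMod 2, x = 0 ∨ x = 1 := by decide
      rcases hx (m - i) with h | h
      · exact hmi (by linear_combination h)
      · exact hmi1 (by linear_combination h)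
    have hne2 : v i ≠ v (i + 2) := by
      intro h
      have h1 := hv h
      have h2 : ((2 : ℕ) : ZMod k) = 0 := by push_cast; linear_combination -h1
      exact hcast_ne 2 (by omega) (by omega) h2
    obtain ⟨f, hfc, hfends⟩ := hclique (color (e i)) (v i) (v (i + 2)) hne2
      ⟨e i, rfl, by rw [hends i]; exact Sym2.mem_mk_left _ _⟩
      ⟨e (i + 1), hcol.symm, by
        rw [hends (i + 1)]
        have : i + 1 + 1 = i + 2 := by ring
        rw [this]
        exact Sym2.mem_mk_right _ _⟩
    have hfe : ∀ t : ZMod k, f ≠ e t := by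
      intro t hft
      have hft' : s(v t, v (t + 1)) = s(v i, v (i + 2)) := by
        rw [← hends t, ← hft, hfends]
      rcases Sym2.eq_iff.mp hft' with ⟨h1, h2⟩ | ⟨h1, h2⟩
      · have ht : t = i := hv h1
        have ht2 : t + 1 = i + 2 := hv h2
        rw [ht] at ht2
        have h3 : ((1 : ℕ) : ZMod k) = 0 := by push_cast; linear_combination -ht2
        exact hcast_ne 1 (by omega) (by omega) h3
      · have ht : t = i + 2 := hv h1
        have ht2 : t + 1 = i := hv h2
        rw [ht] at ht2
        have h3 : ((3 : ℕ) : ZMod k) = 0 := by push_cast; linear_combination ht2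
        have h4 := (ZMod.natCast_eq_zero_iff 3 k).mp h3
        have hk3' : k = 3 := by
          have := Nat.le_of_dvd (by omega) h4
          omega
        subst hk3'
        have hx : ∀ x : ZMod 3, x = 0 ∨ x = 1 ∨ x = 2 := by decide
        rcases hx (m - i) with h | h | h
        · exact hmi (by linear_combination h)
        · exact hmi1 (by linear_combination h)
        · have hm2 : m = i + 2 := by linear_combination h
          exact hmc (by rw [hm2, ← ht, ← hft, hfc])
    have hab : (i + 2 : ZMod k) ≠ i := by
      intro h
      have h2 : ((2 : ℕ) : ZMod k) = 0 := by push_cast; linear_combination h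
      exact hcast_ne 2 (by omega) (by omega) h2
    have hcyc := shortcut_cycle ends k v e hk hv he hends (i + 2) i f hab hfends hfe
    have hcd2 : ((k - 2 : ℕ) : ZMod k) = i - (i + 2) := by
      rw [Nat.cast_sub (by omega), ZMod.natCast_self]
      push_cast
      ring
    have hdval : (i - (i + 2)).val = k - 2 := by
      rw [← hcd2, ZMod.val_cast_of_lt (by omega)]
    -- new cycle is bichromatic
    set L : ℕ := (i - (i + 2)).val + 1 with hL
    have hLval : L = k - 1 := by omega
    haveI : NeZero L := ⟨by omega⟩
    set e' : ZMod L → E :=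
      fun t => if ((t.val : ℕ) : ZMod k) = i - (i + 2) then f
        else e ((i + 2) + (t.val : ZMod k)) with he'
    have hchord : e' (((k - 2 : ℕ) : ZMod L)) = f := by
      rw [he']
      simp only []
      rw [ZMod.val_cast_of_lt (by omega), if_pos hcd2]
    set r : ℕ := (m - (i + 2)).val with hr
    have hrk : r < k := ZMod.val_lt _
    have hrr : ((r : ℕ) : ZMod k) = m - (i + 2) := ZMod.natCast_rightInverse _
    have hrne2 : r ≠ k - 2 := by
      intro h
      apply hmi
      have : m - (i + 2) = i - (i + 2) := by
        rw [← hrr, h, Nat.cast_sub (by omega), ZMod.natCast_self]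
        push_cast
        ring
      linear_combination this
    have hrne1 : r ≠ k - 1 := by
      intro h
      apply hmi1
      have : m - (i + 2) = ((k - 1 : ℕ) : ZMod k) := by rw [← hrr, h]
      rw [Nat.cast_sub (by omega), ZMod.natCast_self] at this
      push_cast at this
      linear_combination this
    have harc : e' ((r : ℕ) : ZMod L) = e m := by
      rw [he']
      simp only []
      rw [ZMod.val_cast_of_lt (by omega)]
      rw [if_neg]
      · rw [hrr]
        congr 1
        ring
      · intro h
        rw [hrr] at h
        apply hrne2
        have : ((r : ℕ) : ZMod k) = ((k - 2 : ℕ) : ZMod k) := by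
          rw [hrr, h, Nat.cast_sub (by omega), ZMod.natCast_self]
          push_cast
          ring
        have := congrArg ZMod.val this
        rwa [ZMod.val_cast_of_lt (by omega), ZMod.val_cast_of_lt (by omega)] at this
    have hbi' : ∃ s t : ZMod L, color (e' s) ≠ color (e' t) :=
      ⟨((r : ℕ) : ZMod L), ((k - 2 : ℕ) : ZMod L), by rw [harc, hchord, hfc]; exact hmc⟩
    have := hmin L _ _ hcyc hbi'
    omega
  -- Step 2: main argument.
  intro i j hcol
  simp only at hcol
  by_contra hij
  have hji1 : j ≠ i + 1 := by
    intro h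
    exact hadj i (by rw [← h]; exact hcol)
  have hij1 : i ≠ j + 1 := by
    intro h
    exact hadj j (by rw [← h]; exact hcol.symm)
  have hvne : v (i + 1) ≠ v j := fun h => hji1 ((hv h).symm)
  obtain ⟨f, hfc, hfends⟩ := hclique (color (e i)) (v (i + 1)) (v j) hvne
    ⟨e i, rfl, by rw [hends i]; exact Sym2.mem_mk_right _ _⟩
    ⟨e j, hcol.symm, by rw [hends j]; exact Sym2.mem_mk_left _ _⟩
  have hfe : ∀ t : ZMod k, f ≠ e t := by
    intro t hft
    have hft' : s(v t, v (t + 1)) = s(v (i + 1), v j) := by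
      rw [← hends t, ← hft, hfends]
    rcases Sym2.eq_iff.mp hft' with ⟨h1, h2⟩ | ⟨h1, h2⟩
    · have ht : t = i + 1 := hv h1
      have ht2 : t + 1 = j := hv h2
      apply hadj i
      rw [← ht, ← hft, hfc]
    · have ht : t = j := hv h1
      have ht2 : t + 1 = i + 1 := hv h2
      rw [ht] at ht2
      exact hij (add_right_cancel ht2).symm
  have hfends' : ends f = s(v j, v (i + 1)) := by rw [hfends, Sym2.eq_swap]
  have hcyc := shortcut_cycle ends k v e hk hv he hends (i + 1) j f
    (fun h => hji1 h.symm) hfends' hfe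
  set D : ℕ := (j - (i + 1)).val with hD
  have hDk : D < k := ZMod.val_lt _
  have hDD : ((D : ℕ) : ZMod k) = j - (i + 1) := ZMod.natCast_rightInverse _
  have hDne : D ≠ k - 1 := by
    intro h
    apply hij
    have : j - (i + 1) = ((k - 1 : ℕ) : ZMod k) := by rw [← hDD, h]
    rw [Nat.cast_sub (by omega), ZMod.natCast_self] at this
    push_cast at this
    linear_combination -this
  set L : ℕ := D + 1 with hL
  haveI : NeZero L := ⟨by omega⟩
  set e' : ZMod L → E :=
    fun t => if ((t.val : ℕ) : ZMod k) = j - (i + 1) then f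
      else e ((i + 1) + (t.val : ZMod k)) with he'
  have hchord : e' ((D : ℕ) : ZMod L) = f := by
    rw [he']
    simp only []
    rw [ZMod.val_cast_of_lt (by omega), if_pos hDD]
  have harc : e' 0 = e (i + 1) := by
    rw [he']
    simp only []
    rw [ZMod.val_zero]
    rw [if_neg]
    · norm_num
    · intro h
      apply hji1
      simp only [Nat.cast_zero] at h
      linear_combination -h
  have hbi' : ∃ s t : ZMod L, color (e' s) ≠ color (e' t) := by
    refine ⟨0, ((D : ℕ) : ZMod L), ?_⟩
    rw [hchord, harc, hfc]
    exact fun h => hadj i h.symm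
  have := hmin L _ _ hcyc hbi'
  omega
end

section
/- Existence of an LP optimum with the rebalancing property: Let J be a finite set of jobs each with a two-element machine set M(j) ⊆ M, cap : M → ℕ. Among all fractional assignments x (x(j,m) ≥ 0 supported on M(j), summing to 1 over M(j) for each j) minimizing Σ_m max(y_x(m), cap(m)) where y_x(m) = Σ_j x(j,m), there exists one, x*, with the property: for every job j with M(j) = {a, b}, if y_{x*}(a) ≥ cap(a) and x*(j,a) > 0, then y_{x*}(b) ≥ cap(b). -/
/-- A feasible fractional assignment of two-machine jobs to machines. -/
def FracFeasible {J M : Type} [Fintype J] (Mset : J → Finset M) (x : J → M → ℝ) : Prop :=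
  (∀ j m, 0 ≤ x j m) ∧ (∀ j m, m ∉ Mset j → x j m = 0) ∧ ∀ j, ∑ m ∈ Mset j, x j m = 1

/-- Existence of an LP optimum with the rebalancing property: among all feasible fractional
assignments `x` minimizing `Σ_m max (y_x m) (cap m)` where `y_x m = Σ_j x j m`, there is
one, `x*`, such that for every job `j` with `Mset j = {a, b}`: if `y_{x*} a ≥ cap a` and
`x* j a > 0`, then `y_{x*} b ≥ cap b`. -/
theorem exists_optimum_with_rebalancing {J M : Type} [Fintype J] [Fintype M]
    [DecidableEq M] (Mset : J → Finset M) (hcard : ∀ j, (Mset j).card = 2)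
    (cap : M → ℕ) :
    ∃ x : J → M → ℝ, FracFeasible Mset x ∧
      (∀ x' : J → M → ℝ, FracFeasible Mset x' →
        ∑ m, max (∑ j, x j m) ((cap m : ℝ)) ≤ ∑ m, max (∑ j, x' j m) ((cap m : ℝ))) ∧
      ∀ (j : J) (a b : M), Mset j = {a, b} →
        (cap a : ℝ) ≤ ∑ j', x j' a → 0 < x j a → (cap b : ℝ) ≤ ∑ j', x j' b := by
  classical
  set F : (J → M → ℝ) → ℝ := fun x => ∑ m, max (∑ j, x j m) ((cap m : ℝ)) with hFdef
  set g : (J → M → ℝ) → ℝ :=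
    fun x => ∑ m, (max ((cap m : ℝ) - ∑ j, x j m) 0) ^ 2 with hgdef
  set S : Set (J → M → ℝ) := {x | FracFeasible Mset x} with hSdef
  -- S is nonempty
  have hpick : ∀ j, ∃ m, m ∈ Mset j := by
    intro j
    have : 0 < (Mset j).card := by rw [hcard j]; norm_num
    exact Finset.card_pos.mp this
  have hSne : S.Nonempty := by
    refine ⟨fun j m => if m = Classical.choose (hpick j) then (1 : ℝ) else 0, ?_, ?_, ?_⟩
    · intro j m; dsimp only; split <;> norm_num
    · intro j m hm; dsimp only
      split
      · exact absurd (by simpa [*] using Classical.choose_spec (hpick j)) hm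
      · rfl
    · intro j
      rw [Finset.sum_ite_eq' (Mset j) (Classical.choose (hpick j)) (fun _ => (1 : ℝ))]
      simp [Classical.choose_spec (hpick j)]
  -- S is compact
  have hSsub : S ⊆ Set.univ.pi fun _ : J => Set.univ.pi fun _ : M => Set.Icc (0 : ℝ) 1 := by
    rintro x ⟨hx0, hxsupp, hxsum⟩ j _ m _
    refine ⟨hx0 j m, ?_⟩
    by_cases hm : m ∈ Mset j
    · calc x j m ≤ ∑ m' ∈ Mset j, x j m' :=
            Finset.single_le_sum (fun m' _ => hx0 j m') hm
        _ = 1 := hxsum j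
    · rw [hxsupp j m hm]; norm_num
  have hSclosed : IsClosed S := by
    have h1 : IsClosed {x : J → M → ℝ | ∀ j m, 0 ≤ x j m} := by
      have : {x : J → M → ℝ | ∀ j m, 0 ≤ x j m}
          = ⋂ j, ⋂ m, {x : J → M → ℝ | 0 ≤ x j m} := by
        ext x; simp
      rw [this]
      exact isClosed_iInter fun j => isClosed_iInter fun m =>
        isClosed_le continuous_const ((continuous_apply m).comp (continuous_apply j))
    have h2 : IsClosed {x : J → M → ℝ | ∀ j m, m ∉ Mset j → x j m = 0} := by
      have : {x : J → M → ℝ | ∀ j m, m ∉ Mset j → x j m = 0}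
          = ⋂ j, ⋂ m, {x : J → M → ℝ | m ∉ Mset j → x j m = 0} := by
        ext x; simp
      rw [this]
      refine isClosed_iInter fun j => isClosed_iInter fun m => ?_
      by_cases hm : m ∈ Mset j
      · simp only [hm, not_true_eq_false, false_implies, Set.setOf_true]
        exact isClosed_univ
      · simp only [hm, not_false_eq_true, true_implies]
        exact isClosed_eq ((continuous_apply m).comp (continuous_apply j)) continuous_const
    have h3 : IsClosed {x : J → M → ℝ | ∀ j, ∑ m ∈ Mset j, x j m = 1} := by
      have : {x : J → M → ℝ | ∀ j, ∑ m ∈ Mset j, x j m = 1}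
          = ⋂ j, {x : J → M → ℝ | ∑ m ∈ Mset j, x j m = 1} := by
        ext x; simp
      rw [this]
      exact isClosed_iInter fun j => isClosed_eq
        (continuous_finset_sum _ fun m _ => (continuous_apply m).comp (continuous_apply j))
        continuous_const
    have : S = {x : J → M → ℝ | ∀ j m, 0 ≤ x j m}
        ∩ ({x : J → M → ℝ | ∀ j m, m ∉ Mset j → x j m = 0}
          ∩ {x : J → M → ℝ | ∀ j, ∑ m ∈ Mset j, x j m = 1}) := by
      ext x
      simp only [hSdef, Set.mem_setOf_eq, Set.mem_inter_iff, FracFeasible]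
    rw [this]
    exact h1.inter (h2.inter h3)
  have hScompact : IsCompact S := by
    refine IsCompact.of_isClosed_subset ?_ hSclosed hSsub
    exact isCompact_univ_pi fun _ => isCompact_univ_pi fun _ => isCompact_Icc
  -- continuity of the objectives
  have hFcont : Continuous F := by
    refine continuous_finset_sum _ fun m _ => Continuous.max ?_ continuous_const
    exact continuous_finset_sum _ fun j _ => (continuous_apply m).comp (continuous_apply j)
  have hgcont : Continuous g := by
    refine continuous_finset_sum _ fun m _ => Continuous.pow ?_ 2
    refine Continuous.max ?_ continuous_const
    exact Continuous.sub continuous_const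
      (continuous_finset_sum _ fun j _ => (continuous_apply m).comp (continuous_apply j))
  -- a minimizer of F on S
  obtain ⟨x₁, hx₁S, hx₁min⟩ := hScompact.exists_isMinOn hSne hFcont.continuousOn
  rw [isMinOn_iff] at hx₁min
  -- the set of minimizers
  set S' : Set (J → M → ℝ) := S ∩ {x | F x ≤ F x₁} with hS'def
  have hS'compact : IsCompact S' :=
    hScompact.inter_right (isClosed_le hFcont continuous_const)
  have hS'ne : S'.Nonempty := ⟨x₁, hx₁S, show F x₁ ≤ F x₁ from le_rfl⟩
  -- a minimizer of g on S'
  obtain ⟨x, hxS', hxmin⟩ := hS'compact.exists_isMinOn hS'ne hgcont.continuousOn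
  rw [isMinOn_iff] at hxmin
  obtain ⟨hxS, hxF⟩ := hxS'
  have hxopt : ∀ x' : J → M → ℝ, FracFeasible Mset x' → F x ≤ F x' := by
    intro x' hx'
    exact le_trans hxF (hx₁min x' hx')
  refine ⟨x, hxS, hxopt, ?_⟩
  -- the rebalancing property
  intro j a b hab hca hxja
  by_contra hyb
  push_neg at hyb
  have hne : a ≠ b := by
    intro h
    have := hcard j
    rw [hab, h] at this
    simp at this
  obtain ⟨hx0, hxsupp, hxsum⟩ := hxS
  set s : ℝ := (cap b : ℝ) - ∑ j', x j' b with hsdef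
  have hs : 0 < s := by simp only [hsdef]; linarith
  set ε : ℝ := min (x j a) (s / 2) with hεdef
  have hε : 0 < ε := lt_min hxja (by linarith)
  have hεa : ε ≤ x j a := min_le_left _ _
  have hεs : ε ≤ s / 2 := min_le_right _ _
  -- the perturbed assignment
  set x' : J → M → ℝ := fun j' m =>
    if j' = j then (if m = a then x j a - ε else if m = b then x j b + ε else x j m)
    else x j' m with hx'def
  have hx'ja : x' j a = x j a - ε := by simp [hx'def]
  have hx'jb : x' j b = x j b + ε := by simp [hx'def, Ne.symm hne]
  have hx'jm : ∀ m, m ≠ a → m ≠ b → x' j m = x j m := by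
    intro m hma hmb; simp [hx'def, hma, hmb]
  have hx'other : ∀ j', j' ≠ j → ∀ m, x' j' m = x j' m := by
    intro j' hj' m; simp [hx'def, hj']
  have haMem : a ∈ Mset j := by rw [hab]; exact Finset.mem_insert_self _ _
  have hbMem : b ∈ Mset j := by rw [hab]; simp
  -- column sums of x'
  have hsuma : ∑ j', x' j' a = (∑ j', x j' a) - ε := by
    have h : ∀ j' ∈ Finset.univ, x' j' a = x j' a + (if j' = j then -ε else 0) := by
      intro j' _
      by_cases h : j' = j
      · subst h; rw [if_pos rfl, hx'ja]; ring
      · rw [if_neg h, hx'other j' h]; ring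
    rw [Finset.sum_congr rfl h, Finset.sum_add_distrib,
      Finset.sum_ite_eq' Finset.univ j (fun _ => -ε)]
    simp; ring
  have hsumb : ∑ j', x' j' b = (∑ j', x j' b) + ε := by
    have h : ∀ j' ∈ Finset.univ, x' j' b = x j' b + (if j' = j then ε else 0) := by
      intro j' _
      by_cases h : j' = j
      · subst h; rw [if_pos rfl, hx'jb]
      · rw [if_neg h, hx'other j' h]; ring
    rw [Finset.sum_congr rfl h, Finset.sum_add_distrib,
      Finset.sum_ite_eq' Finset.univ j (fun _ => ε)]
    simp
  have hsumm : ∀ m, m ≠ a → m ≠ b → ∑ j', x' j' m = ∑ j', x j' m := by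
    intro m hma hmb
    refine Finset.sum_congr rfl fun j' _ => ?_
    by_cases h : j' = j
    · subst h; exact hx'jm m hma hmb
    · exact hx'other j' h m
  -- x' is feasible
  have hx'feas : FracFeasible Mset x' := by
    refine ⟨?_, ?_, ?_⟩
    · intro j' m
      by_cases h : j' = j
      · rw [h]
        by_cases hma : m = a
        · rw [hma, hx'ja]; linarith
        · by_cases hmb : m = b
          · rw [hmb, hx'jb]; have := hx0 j b; linarith
          · rw [hx'jm m hma hmb]; exact hx0 j m
      · rw [hx'other j' h m]; exact hx0 j' m
    · intro j' m hm
      by_cases h : j' = j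
      · rw [h] at hm ⊢
        have hma : m ≠ a := by rintro rfl; exact hm haMem
        have hmb : m ≠ b := by rintro rfl; exact hm hbMem
        rw [hx'jm m hma hmb]; exact hxsupp j m hm
      · rw [hx'other j' h m]; exact hxsupp j' m hm
    · intro j'
      by_cases h : j' = j
      · rw [h, hab, Finset.sum_pair hne, hx'ja, hx'jb]
        have h1 := hxsum j
        rw [hab, Finset.sum_pair hne] at h1
        linarith
      · rw [Finset.sum_congr rfl fun m _ => hx'other j' h m]; exact hxsum j'
  have hyb' : (∑ j', x j' b) + ε ≤ (cap b : ℝ) := by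
    have h1 : ε ≤ s / 2 := hεs
    rw [hsdef] at h1
    linarith
  -- F does not increase
  have hFle : F x' ≤ F x := by
    simp only [hFdef]
    refine Finset.sum_le_sum fun m _ => ?_
    by_cases hma : m = a
    · subst hma; rw [hsuma]; exact max_le_max (by linarith) le_rfl
    · by_cases hmb : m = b
      · subst hmb
        rw [hsumb, max_eq_right hyb', max_eq_right (le_of_lt hyb)]
      · rw [hsumm m hma hmb]
  -- g strictly decreases
  have hglt : g x' < g x := by
    simp only [hgdef]
    have hsub : ({a, b} : Finset M) ⊆ Finset.univ := Finset.subset_univ _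
    rw [← Finset.sum_sdiff hsub, ← Finset.sum_sdiff hsub]
    have heq : ∑ m ∈ Finset.univ \ {a, b}, (max ((cap m : ℝ) - ∑ j, x' j m) 0) ^ 2
        = ∑ m ∈ Finset.univ \ {a, b}, (max ((cap m : ℝ) - ∑ j, x j m) 0) ^ 2 := by
      refine Finset.sum_congr rfl fun m hm => ?_
      rw [Finset.mem_sdiff, Finset.mem_insert, Finset.mem_singleton] at hm
      push_neg at hm
      rw [hsumm m hm.2.1 hm.2.2]
    rw [heq]
    refine add_lt_add_of_le_of_lt le_rfl ?_
    rw [Finset.sum_pair hne, Finset.sum_pair hne, hsuma, hsumb]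
    have ta0 : (0 : ℝ) ≤ max ((cap a : ℝ) - ((∑ j', x j' a) - ε)) 0 := le_max_right _ _
    have ta : max ((cap a : ℝ) - ((∑ j', x j' a) - ε)) 0 ≤ ε :=
      max_le (by linarith) (le_of_lt hε)
    have hta : (max ((cap a : ℝ) - ((∑ j', x j' a) - ε)) 0) ^ 2 ≤ ε ^ 2 :=
      pow_le_pow_left₀ ta0 ta 2
    have hεs' : ε ≤ ((cap b : ℝ) - ∑ j', x j' b) / 2 := by
      have h2 := hεs; rw [hsdef] at h2; exact h2
    have htb : max ((cap b : ℝ) - ((∑ j', x j' b) + ε)) 0 = s - ε := by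
      rw [max_eq_left (by linarith)]
      rw [hsdef]; ring
    have htbold : max ((cap b : ℝ) - ∑ j', x j' b) 0 = s := by
      rw [max_eq_left (by linarith)]
    have htaold : max ((cap a : ℝ) - ∑ j', x j' a) 0 = 0 := max_eq_right (by linarith)
    rw [htb, htbold, htaold]
    nlinarith [hta, hε, hεs, hs]
  have hx'S' : x' ∈ S' := ⟨hx'feas, show F x' ≤ F x₁ from hFle.trans hxF⟩
  have := hxmin x' hx'S'
  linarith
end

section
/- In the two-machine-per-job LP setting with optimal solution x* satisfying the rebalancing property, let M* = { m : y*(m) ≥ cap(m) } and J* = { j : x*(j,m) > 0 for some m ∈ M* }. Then every job j ∈ J* satisfies M(j) ⊆ M*, and for every subset M' ⊆ M*, the number of jobs in J* adjacent to M' (i.e., with M(j) ∩ M' ≠ ∅) is at least Σ_{m ∈ M'} cap(m). -/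
/-- Given an optimal feasible fractional assignment `x` with the rebalancing property, let
`M* = {m : y m ≥ cap m}` (where `y m = Σ_j x j m`) and `J* = {j : x j m > 0 for some
m ∈ M*}`. Then every `j ∈ J*` has `Mset j ⊆ M*`, and for every subset `M' ⊆ M*` the number
of jobs of `J*` adjacent to `M'` is at least `Σ_{m ∈ M'} cap m`. -/
theorem optimum_gives_hall_condition {J M : Type} [Fintype J] [Fintype M]
    [DecidableEq M] (Mset : J → Finset M) (hcard : ∀ j, (Mset j).card = 2)
    (cap : M → ℕ) (x : J → M → ℝ)
    (hfeas : FracFeasible Mset x)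
    (hopt : ∀ x' : J → M → ℝ, FracFeasible Mset x' →
      ∑ m, max (∑ j, x j m) ((cap m : ℝ)) ≤ ∑ m, max (∑ j, x' j m) ((cap m : ℝ)))
    (hrebal : ∀ (j : J) (a b : M), Mset j = {a, b} →
      (cap a : ℝ) ≤ ∑ j', x j' a → 0 < x j a → (cap b : ℝ) ≤ ∑ j', x j' b) :
    (∀ j : J, (∃ m, (cap m : ℝ) ≤ ∑ j', x j' m ∧ 0 < x j m) →
      ∀ m ∈ Mset j, (cap m : ℝ) ≤ ∑ j', x j' m) ∧
    ∀ M' : Finset M, (∀ m ∈ M', (cap m : ℝ) ≤ ∑ j', x j' m) →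
      ∑ m ∈ M', cap m ≤
        {j : J | (∃ m, (cap m : ℝ) ≤ ∑ j', x j' m ∧ 0 < x j m) ∧
          ∃ m ∈ M', m ∈ Mset j}.ncard := by
  classical
  obtain ⟨hnn, hsupp, hsum⟩ := hfeas
  have part1 : ∀ j : J, (∃ m, (cap m : ℝ) ≤ ∑ j', x j' m ∧ 0 < x j m) →
      ∀ m ∈ Mset j, (cap m : ℝ) ≤ ∑ j', x j' m := by
    intro j ⟨m, hmy, hxj⟩ m' hm'
    obtain ⟨a, b, hab, hset⟩ := Finset.card_eq_two.mp (hcard j)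
    have hmmem : m ∈ Mset j := by
      by_contra h
      exact absurd (hsupp j m h) (ne_of_gt hxj)
    rw [hset] at hmmem hm'
    have hba : Mset j = {b, a} := by rw [hset]; exact Finset.pair_comm a b
    rcases Finset.mem_insert.mp hmmem with hma | hmb
    · subst hma
      have hb := hrebal j m b hset hmy hxj
      rcases Finset.mem_insert.mp hm' with h | h
      · subst h; exact hmy
      · rw [Finset.mem_singleton.mp h]; exact hb
    · rw [Finset.mem_singleton] at hmb; subst hmb
      have ha := hrebal j m a hba hmy hxj
      rcases Finset.mem_insert.mp hm' with h | h
      · subst h; exact ha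
      · rw [Finset.mem_singleton.mp h]; exact hmy
  refine ⟨part1, ?_⟩
  intro M' hM'
  set P : J → Prop := fun j => (∃ m, (cap m : ℝ) ≤ ∑ j', x j' m ∧ 0 < x j m) ∧
      ∃ m ∈ M', m ∈ Mset j with hP
  set S : Finset J := Finset.univ.filter P with hS
  have hncard : {j : J | P j}.ncard = S.card := by
    rw [Set.ncard_eq_toFinset_card']
    congr 1
    ext j
    simp [hS]
  have key : ((∑ m ∈ M', cap m : ℕ) : ℝ) ≤ (S.card : ℝ) := by
    push_cast
    calc (∑ m ∈ M', (cap m : ℝ)) ≤ ∑ m ∈ M', ∑ j', x j' m :=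
          Finset.sum_le_sum fun m hm => hM' m hm
      _ = ∑ j, ∑ m ∈ M', x j m := Finset.sum_comm
      _ = ∑ j ∈ S, ∑ m ∈ M', x j m := by
          refine (Finset.sum_subset (Finset.subset_univ S) ?_).symm
          intro j _ hjS
          refine Finset.sum_eq_zero fun m hm => ?_
          by_contra h
          have hx : 0 < x j m := lt_of_le_of_ne (hnn j m) (Ne.symm h)
          have hmem : m ∈ Mset j := by
            by_contra hmem
            exact absurd (hsupp j m hmem) (ne_of_gt hx)
          exact hjS (Finset.mem_filter.mpr ⟨Finset.mem_univ j,
            ⟨m, hM' m hm, hx⟩, m, hm, hmem⟩)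
      _ ≤ ∑ _j ∈ S, (1 : ℝ) := by
          refine Finset.sum_le_sum fun j _ => ?_
          have h1 : ∑ m ∈ M', x j m = ∑ m ∈ M' ∩ Mset j, x j m := by
            refine (Finset.sum_subset Finset.inter_subset_left ?_).symm
            intro m hm hm2
            refine hsupp j m fun hmem => hm2 (Finset.mem_inter.mpr ⟨hm, hmem⟩)
          rw [h1]
          calc ∑ m ∈ M' ∩ Mset j, x j m ≤ ∑ m ∈ Mset j, x j m :=
                Finset.sum_le_sum_of_subset_of_nonneg Finset.inter_subset_right
                  (fun m _ _ => hnn j m)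
            _ = 1 := hsum j
      _ = (S.card : ℝ) := by simp
  rw [hncard]
  exact_mod_cast key
end
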